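/- For the contact form λ₀ = -(1-3cos²θ)dt - √6 cosθ sin²θ dφ on S¹×S², the vector field R = (-1/(1+3cos⁴θ))·((1-3cos²θ)∂_t + √6 cosθ ∂_φ) satisfies λ₀(R)=1 and dλ₀(R,·)=0, i.e. R is the Reeb vector field of λ₀. -/

import Mathlib

/-!
After clearing the positive denominator `1 + 3 cos⁴θ`, with `c = cos θ`, `s = sin θ`:
`λ₀(R) = 1` is `(1 - 3c²)² + 6c²s² = 1 + 3c⁴`, and, since `a₁' = -6cs` and
`a₂' = √6 s (s² - 2c²)`, the Reeb condition is
`6cs (1 - 3c²) - 6cs (s² - 2c²) = 6cs (1 - c² - s²) = 0`.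
Both follow from `s² + c² = 1` and `√6² = 6`.
-/

/-- Coefficients of Taubes' contact form `λ₀ = a₁(θ) dt + a₂(θ) dφ` on `S¹ × S²`. -/
noncomputable def taubesA1 (θ : ℝ) : ℝ := -(1 - 3 * Real.cos θ ^ 2)
noncomputable def taubesA2 (θ : ℝ) : ℝ := -(Real.sqrt 6) * Real.cos θ * Real.sin θ ^ 2

/-- Components of the vector field
`R = (-1/(1+3cos⁴θ)) ((1-3cos²θ) ∂_t + √6 cosθ ∂_φ)`. -/
noncomputable def reebT (θ : ℝ) : ℝ := -(1 - 3 * Real.cos θ ^ 2) / (1 + 3 * Real.cos θ ^ 4)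
noncomputable def reebPhi (θ : ℝ) : ℝ := -(Real.sqrt 6) * Real.cos θ / (1 + 3 * Real.cos θ ^ 4)

open Real

lemma hasDerivAt_taubesA1 (θ : ℝ) : HasDerivAt taubesA1 (-(6 * cos θ * sin θ)) θ := by
  have h := (((hasDerivAt_cos θ).pow 2).const_mul 3).const_sub 1 |>.neg
  exact h.congr_deriv (by simp only [Nat.add_one_sub_one]; ring)

lemma hasDerivAt_taubesA2 (θ : ℝ) :
    HasDerivAt taubesA2 (√6 * sin θ * (sin θ ^ 2 - 2 * cos θ ^ 2)) θ := by
  have h := ((hasDerivAt_cos θ).const_mul (-√6)).mul ((hasDerivAt_sin θ).pow 2)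
  exact h.congr_deriv (by simp only [Pi.pow_apply, Nat.add_one_sub_one]; ring)

lemma one_add_three_mul_cos_pow_four_pos (θ : ℝ) : 0 < 1 + 3 * cos θ ^ 4 := by positivity

lemma taubesForm_apply_reeb (θ : ℝ) : taubesA1 θ * reebT θ + taubesA2 θ * reebPhi θ = 1 := by
  have hD := (one_add_three_mul_cos_pow_four_pos θ).ne'
  unfold taubesA1 taubesA2 reebT reebPhi
  field_simp
  linear_combination (cos θ ^ 2 * sin θ ^ 2) * mul_self_sqrt (show (0 : ℝ) ≤ 6 by norm_num) +
    6 * cos θ ^ 2 * sin_sq_add_cos_sq θ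

lemma deriv_taubesForm_apply_reeb (θ : ℝ) :
    deriv taubesA1 θ * reebT θ + deriv taubesA2 θ * reebPhi θ = 0 := by
  have hD := (one_add_three_mul_cos_pow_four_pos θ).ne'
  rw [(hasDerivAt_taubesA1 θ).deriv, (hasDerivAt_taubesA2 θ).deriv]
  unfold reebT reebPhi
  field_simp
  linear_combination (cos θ * sin θ * (2 * cos θ ^ 2 - sin θ ^ 2)) *
      mul_self_sqrt (show (0 : ℝ) ≤ 6 by norm_num) - 6 * cos θ * sin θ * sin_sq_add_cos_sq θ

/-- `λ₀(R) = a₁ R_t + a₂ R_φ = 1`, and since `dλ₀ = a₁' dθ∧dt + a₂' dθ∧dφ` and `R` has no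
`∂_θ`-component, `ι_R dλ₀ = -(a₁' R_t + a₂' R_φ) dθ = 0`.  Hence `R` is the Reeb vector
field of `λ₀`. -/
theorem stmt_1 :
    (∀ θ : ℝ, taubesA1 θ * reebT θ + taubesA2 θ * reebPhi θ = 1) ∧
    (∀ θ : ℝ, deriv taubesA1 θ * reebT θ + deriv taubesA2 θ * reebPhi θ = 0) :=
  ⟨taubesForm_apply_reeb, deriv_taubesForm_apply_reeb⟩
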